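/- Two-weight weak-type bound for the local fractional maximal operator: let a > 0, 1 ≤ p ≤ q < ∞, 0 ≤ α < d. If (u,v) ∈ A^{b'}_{p,q,α} for some b' > a, then there is C > 0 such that for all f and all λ > 0, γ_u({x : M^a_α f(x) > λ}) ≤ C λ^{−q} (∫_{ℝ^d} |f|^p v dγ)^{q/p}, where γ_u(E) = ∫_E u dγ and M^a_α f(x) = sup_{Q∈𝒬_a, Q∋x} γ(Q)^{α/d − 1} ∫_Q |f| dγ. -/

import Mathlib

/-!
Every point of `{M^a_α f > λ}` lies in a cube `Q ∈ 𝒬_a` with `λ γ(Q)^{1-α/d} ≤ ∫_Q f dγ`. Its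
dilate `kQ`, `k = b'/a`, lies in `𝒬_{b'}`, where the Gaussian density oscillates by a bounded
factor, so `γ(kQ) ≲ γ(Q)`. Hölder's inequality with the weight `v` (for `p = 1`, the pointwise form
of the condition) together with the `A^{b'}_{p,q,α}` condition on `kQ` then gives
`γ_u(kQ) ≲ λ^{-q} (∫_{kQ} f^p v dγ)^{q/p}`. A Besicovitch-type selection, greedy over dyadic
generations of side lengths, extracts countably many of these cubes whose dilates cover the level
set with overlap bounded in terms of `d` and `a/b'`; since `q/p ≥ 1`, the local estimates add up.
-/

open MeasureTheory ENNReal Set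

noncomputable section

abbrev E (d : ℕ) := EuclideanSpace ℝ (Fin d)

def gaussianM (d : ℕ) : Measure (E d) :=
  volume.withDensity fun x => ENNReal.ofReal (Real.pi ^ (-(d : ℝ)/2) * Real.exp (-‖x‖^2))

def cube (d : ℕ) (c : E d) (l : ℝ) : Set (E d) := {x | ∀ i, |x i - c i| ≤ l / 2}

def mfun {d : ℕ} (x : E d) : ℝ := if ‖x‖ ≤ 1 then 1 else 1 / ‖x‖

def adm (d : ℕ) (a : ℝ) (c : E d) (l : ℝ) : Prop := 0 < l ∧ l ≤ a * mfun c

def pconj (p : ℝ) : ℝ := p / (p - 1)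

def Aconst (d : ℕ) (a p q α : ℝ) (u v : E d → ℝ≥0∞) : ℝ≥0∞ :=
  ⨆ (c : E d) (l : ℝ) (_ : adm d a c l),
    gaussianM d (cube d c l) ^ (α/d + 1/q - 1/p) *
    ((gaussianM d (cube d c l))⁻¹ * ∫⁻ x in cube d c l, u x ∂(gaussianM d)) ^ (1/q) *
    ((gaussianM d (cube d c l))⁻¹ *
        ∫⁻ x in cube d c l, v x ^ (1 - pconj p) ∂(gaussianM d)) ^ (1/(pconj p))

open Classical in
/-- `(u,v) ∈ A^a_{p,q,α}` for `1 ≤ p`, with the essential-supremum form when `p = 1`. -/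
def APair (d : ℕ) (a p q α : ℝ) (u v : E d → ℝ≥0∞) : Prop :=
  if p = 1 then
    ∃ C : ℝ≥0∞, C ≠ ∞ ∧ ∀ (c : E d) (l : ℝ), adm d a c l →
      ∀ᵐ x ∂(gaussianM d).restrict (cube d c l),
        gaussianM d (cube d c l) ^ (α/d + 1/q - 1) *
          ((gaussianM d (cube d c l))⁻¹ *
            ∫⁻ y in cube d c l, u y ∂(gaussianM d)) ^ (1/q) ≤ C * v x
  else Aconst d a p q α u v < ∞

/-- The local fractional maximal operator
`M^a_α f(x) = sup_{Q∈𝒬_a, Q∋x} γ(Q)^{α/d-1} ∫_Q f dγ`. -/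
def Mloc (d : ℕ) (a α : ℝ) (f : E d → ℝ≥0∞) (x : E d) : ℝ≥0∞ :=
  ⨆ (c : E d) (l : ℝ) (_ : adm d a c l ∧ x ∈ cube d c l),
    gaussianM d (cube d c l) ^ (α/d - 1) * ∫⁻ y in cube d c l, f y ∂(gaussianM d)

namespace ENNReal

theorem rpow_mul_inv_mul_rpow {G : ℝ≥0∞} (hG0 : G ≠ 0) (hGt : G ≠ ∞) (e : ℝ) (U : ℝ≥0∞)
    {a : ℝ} (ha : 0 ≤ a) : G ^ e * (G⁻¹ * U) ^ a = G ^ (e - a) * U ^ a := by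
  rw [mul_rpow_of_nonneg _ _ ha, inv_rpow, ← rpow_neg, ← mul_assoc, ← rpow_add _ _ hG0 hGt,
    sub_eq_add_neg]

theorem le_mul_rpow_of_rpow_neg_mul_le {G X Y : ℝ≥0∞} (hG0 : G ≠ 0) (hGt : G ≠ ∞) {s : ℝ}
    (h : G ^ (-s) * X ≤ Y) : X ≤ Y * G ^ s := by
  calc X = G ^ s * (G ^ (-s) * X) := by
        rw [← mul_assoc, ← rpow_add _ _ hG0 hGt, add_neg_cancel, rpow_zero, one_mul]
    _ ≤ Y * G ^ s := by rw [mul_comm]; gcongr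

theorem mul_rpow_le_of_le_rpow_neg_mul {G X Y : ℝ≥0∞} (hG0 : G ≠ 0) (hGt : G ≠ ∞) {s : ℝ}
    (h : X ≤ G ^ (-s) * Y) : X * G ^ s ≤ Y := by
  calc X * G ^ s ≤ G ^ (-s) * Y * G ^ s := by gcongr
    _ = Y := by rw [mul_right_comm, ← rpow_add _ _ hG0 hGt, neg_add_cancel, rpow_zero, one_mul]

theorem tsum_rpow_le_rpow_tsum {ι : Type*} (a : ι → ℝ≥0∞) {t : ℝ} (ht : 1 ≤ t) :
    ∑' i, a i ^ t ≤ (∑' i, a i) ^ t := by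
  have hsplit : ∀ x : ℝ≥0∞, x ^ t = x ^ (t - 1) * x := fun x => by
    simpa using rpow_add_of_nonneg (x := x) (t - 1) 1 (by linarith) zero_le_one
  calc ∑' i, a i ^ t = ∑' i, a i ^ (t - 1) * a i := by simp only [← hsplit]
    _ ≤ ∑' i, (∑' j, a j) ^ (t - 1) * a i :=
        ENNReal.tsum_le_tsum fun i => by gcongr; exact ENNReal.le_tsum i
    _ = (∑' i, a i) ^ t := by rw [ENNReal.tsum_mul_left, ← hsplit]

end ENNReal

section Grid

variable {X ι : Type*} {s : ℝ} {w : X → ι → ℝ} {J : Set X}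

theorem injOn_floor_div_of_pairwise (hs : 0 < s)
    (hJ : J.Pairwise fun x y => ∃ i, s ≤ |w x i - w y i|) :
    J.InjOn fun x i => ⌊w x i / s⌋ := by
  intro x hx y hy hxy
  by_contra hne
  obtain ⟨i, hi⟩ := hJ hx hy hne
  have h := Int.abs_sub_lt_one_of_floor_eq_floor (congrFun hxy i)
  rw [← sub_div, abs_div, abs_of_pos hs, div_lt_one hs] at h
  exact hi.not_gt h

theorem Set.Pairwise.countable_of_exists_le_abs_sub [Finite ι] (hs : 0 < s)
    (hJ : J.Pairwise fun x y => ∃ i, s ≤ |w x i - w y i|) : J.Countable :=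
  (mapsTo_univ _ _).countable_of_injOn (injOn_floor_div_of_pairwise hs hJ) countable_univ

theorem Set.Pairwise.encard_le_of_exists_le_abs_sub [Fintype ι] {M : ℝ} (hs : 0 < s)
    (hM : ∀ x ∈ J, ∀ i, |w x i| ≤ M)
    (hJ : J.Pairwise fun x y => ∃ i, s ≤ |w x i - w y i|) :
    J.encard ≤ (2 * ⌈M / s⌉₊ + 2) ^ Fintype.card ι := by
  classical
  set K : ℤ := ((⌈M / s⌉₊ : ℕ) : ℤ)
  have hmaps : MapsTo (fun x i => ⌊w x i / s⌋) J
      (Fintype.piFinset fun _ : ι => Finset.Icc (-K - 1) K : Set (ι → ℤ)) := by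
    intro x hx
    simp only [Fintype.mem_piFinset, Finset.mem_Icc, Finset.mem_coe]
    intro i
    have hw : |w x i / s| ≤ M / s := by
      rw [abs_div, abs_of_pos hs]
      exact div_le_div_of_nonneg_right (hM x hx i) hs.le
    have hK : M / s ≤ K := by simpa [K] using Nat.le_ceil (M / s)
    obtain ⟨hlo, hhi⟩ := abs_le.mp hw
    constructor
    · have : (-K - 1 : ℝ) < ⌊w x i / s⌋ := by linarith [Int.lt_floor_add_one (w x i / s)]
      exact_mod_cast this.le
    · exact Int.floor_le_iff.mpr (by linarith)
  calc J.encard ≤ (Fintype.piFinset fun _ : ι => Finset.Icc (-K - 1) K : Set (ι → ℤ)).encard :=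
        encard_le_encard_of_injOn hmaps (injOn_floor_div_of_pairwise hs hJ)
    _ = (2 * ⌈M / s⌉₊ + 2) ^ Fintype.card ι := by
        rw [encard_coe_eq_coe_finsetCard, Fintype.card_piFinset, Finset.prod_const,
          Int.card_Icc, Finset.card_univ]
        norm_cast
        congr 1
        omega

end Grid

section Greedy

variable {α : Type*}

theorem exists_maximal_pairwise_subset (U : Set α) (r : α → α → Prop) :
    ∃ T, Maximal (fun T => T ⊆ U ∧ T.Pairwise r) T := by
  obtain ⟨T, -, hT⟩ := zorn_subset_nonempty {T | T ⊆ U ∧ T.Pairwise r}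
    (fun ch hch hchain _ => ⟨⋃₀ ch, ⟨sUnion_subset fun T hT => (hch hT).1,
      (pairwise_sUnion hchain.directedOn).2 fun T hT => (hch hT).2⟩,
      fun _ => subset_sUnion_of_mem⟩) ∅ ⟨empty_subset _, pairwise_empty _⟩
  exact ⟨T, hT⟩

/-- Greedy selection by generations: generation `n` contributes a maximal `sep n`-separated
family among its points not yet covered by the sets `K x` chosen in earlier generations. -/
theorem exists_greedy_selection (G : ℕ → Set α) (K : α → Set α) (sep : ℕ → α → α → Prop)
    (hsep : ∀ n x y, sep n x y → sep n y x) :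
    ∃ S : ℕ → Set α, (∀ n, S n ⊆ G n) ∧ (∀ n, (S n).Pairwise (sep n)) ∧
      (∀ m n, m < n → ∀ x ∈ S m, ∀ y ∈ S n, y ∉ K x) ∧
      ∀ n, ∀ y ∈ G n,
        (∃ m < n, ∃ x ∈ S m, y ∈ K x) ∨ y ∈ S n ∨ ∃ x ∈ S n, x ≠ y ∧ ¬ sep n x y := by
  choose pick hpick using fun n C => exists_maximal_pairwise_subset (G n \ C) (sep n)
  let cov : ℕ → Set α := fun n =>
    Nat.rec (motive := fun _ => Set α) ∅ (fun m C => C ∪ ⋃ x ∈ pick m C, K x) n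
  have mem_cov : ∀ n y, y ∈ cov n ↔ ∃ m < n, ∃ x ∈ pick m (cov m), y ∈ K x := by
    intro n y
    induction n with
    | zero => simp [cov]
    | succ n ih =>
      change y ∈ cov n ∪ ⋃ x ∈ pick n (cov n), K x ↔ _
      simp only [mem_union, mem_iUnion, ih, exists_prop, Nat.lt_succ_iff_lt_or_eq]
      constructor
      · rintro (⟨m, hm, h⟩ | h)
        exacts [⟨m, .inl hm, h⟩, ⟨n, .inr rfl, h⟩]
      · rintro ⟨m, hm | rfl, h⟩
        exacts [.inl ⟨m, hm, h⟩, .inr h]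
  refine ⟨fun n => pick n (cov n), fun n => (hpick n _).1.1.trans sdiff_subset,
    fun n => (hpick n _).1.2, ?_, ?_⟩
  · intro m n hmn x hx y hy hyK
    exact ((hpick n _).1.1 hy).2 ((mem_cov n y).2 ⟨m, hmn, x, hx, hyK⟩)
  · intro n y hy
    by_cases hc : y ∈ cov n
    · exact .inl ((mem_cov n y).1 hc)
    by_contra! h
    refine h.2.1 ((hpick n _).mem_of_prop_insert ⟨insert_subset ⟨hy, hc⟩ (hpick n _).1.1,
      (hpick n _).1.2.insert fun x hx hne => ?_⟩)
    have := h.2.2 x hx hne.symm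
    exact ⟨hsep _ _ _ this, this⟩

end Greedy

section Holder

variable {X : Type*} [MeasurableSpace X] {μ : Measure X}

theorem lintegral_le_weighted_Lp_mul_Lq {p q : ℝ} (hpq : p.HolderConjugate q)
    {f v : X → ℝ≥0∞} (hf : AEMeasurable f μ) (hv : AEMeasurable v μ)
    (hσ : ∫⁻ x, v x ^ (1 - q) ∂μ ≠ ∞) (hfv : ∀ᵐ x ∂μ, f x ^ p * v x ≠ ∞) :
    ∫⁻ x, f x ∂μ ≤ (∫⁻ x, f x ^ p * v x ∂μ) ^ (1 / p) * (∫⁻ x, v x ^ (1 - q) ∂μ) ^ (1 / q) := by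
  have hp := hpq.pos
  have hv0 : ∀ᵐ x ∂μ, v x ≠ 0 := by
    filter_upwards [ae_lt_top' (hv.pow_const _) hσ] with x hx h0
    rw [h0, ENNReal.zero_rpow_of_neg (by linarith [hpq.symm.lt])] at hx
    exact lt_irrefl _ hx
  have hle : ∀ᵐ x ∂μ, f x ≤ ((fun x => f x * v x ^ (1 / p)) * fun x => (v x ^ (1 / p))⁻¹) x := by
    filter_upwards [hv0, hfv] with x h0 hfin
    by_cases htop : v x = ∞
    · have : f x = 0 := by
        by_contra hf0
        exact hfin (by rw [htop, ENNReal.mul_top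
          (ENNReal.rpow_pos_of_nonneg (pos_iff_ne_zero.2 hf0) hp.le).ne'])
      simp [this]
    · rw [Pi.mul_apply, mul_assoc, ENNReal.mul_inv_cancel
        (ENNReal.rpow_pos_of_nonneg (pos_iff_ne_zero.2 h0) (by positivity)).ne'
        (ENNReal.rpow_ne_top_of_nonneg (by positivity) htop), mul_one]
  calc ∫⁻ x, f x ∂μ ≤ _ := lintegral_mono_ae hle
    _ ≤ _ := ENNReal.lintegral_mul_le_Lp_mul_Lq μ hpq (hf.mul (hv.pow_const _))
        (hv.pow_const _).inv
    _ = _ := by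
        congr 3 <;> ext x
        · rw [ENNReal.mul_rpow_of_nonneg _ _ hp.le, ← ENNReal.rpow_mul,
            one_div_mul_cancel hpq.ne_zero, ENNReal.rpow_one]
        · rw [ENNReal.inv_rpow, ← ENNReal.rpow_mul, ← ENNReal.rpow_neg, one_div_mul_eq_div,
            hpq.symm.div_conj_eq_sub_one, neg_sub]

end Holder

section Testing

variable {X : Type*} [MeasurableSpace X] {μ : Measure X} {P : Set X} {u v f : X → ℝ≥0∞}
  {t q : ℝ}

theorem rpow_setLIntegral_mul_setLIntegral_le_of_ae_le {C : ℝ≥0∞} (hq : 0 < q)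
    (hv : Measurable v) (hf : Measurable f)
    (hP0 : μ P ≠ 0) (hPt : μ P ≠ ∞)
    (hC : ∀ᵐ x ∂μ.restrict P,
      μ P ^ (t + 1 / q - 1) * ((μ P)⁻¹ * ∫⁻ y in P, u y ∂μ) ^ (1 / q) ≤ C * v x) :
    (∫⁻ x in P, u x ∂μ) ^ (1 / q) * ∫⁻ x in P, f x ∂μ ≤
      C * μ P ^ (1 - t) * ∫⁻ x in P, f x * v x ∂μ := by
  rw [ENNReal.rpow_mul_inv_mul_rpow hP0 hPt _ _ (by positivity),
    show t + 1 / q - 1 - 1 / q = -(1 - t) by ring] at hC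
  set K := μ P ^ (-(1 - t)) * (∫⁻ y in P, u y ∂μ) ^ (1 / q)
  have hKf : K * ∫⁻ x in P, f x ∂μ ≤ C * ∫⁻ x in P, f x * v x ∂μ := by
    rw [← lintegral_const_mul _ hf, ← lintegral_const_mul _ (by fun_prop)]
    refine lintegral_mono_ae (hC.mono fun x hx => ?_)
    calc K * f x ≤ C * v x * f x := by gcongr
      _ = C * (f x * v x) := by ring
  rw [mul_assoc] at hKf
  exact (ENNReal.le_mul_rpow_of_rpow_neg_mul_le hP0 hPt hKf).trans_eq (by ring)

theorem rpow_setLIntegral_mul_setLIntegral_le_of_le {p p' : ℝ} {A : ℝ≥0∞}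
    (hpp : p.HolderConjugate p') (hq : 0 < q)
    (hv : Measurable v) (hf : Measurable f) (hP0 : μ P ≠ 0) (hPt : μ P ≠ ∞) (hAt : A ≠ ∞)
    (hA : μ P ^ (t + 1 / q - 1 / p) * ((μ P)⁻¹ * ∫⁻ x in P, u x ∂μ) ^ (1 / q) *
      ((μ P)⁻¹ * ∫⁻ x in P, v x ^ (1 - p') ∂μ) ^ (1 / p') ≤ A)
    (hfv : ∀ᵐ x ∂μ.restrict P, f x ^ p * v x ≠ ∞) :
    (∫⁻ x in P, u x ∂μ) ^ (1 / q) * ∫⁻ x in P, f x ∂μ ≤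
      A * μ P ^ (1 - t) * (∫⁻ x in P, f x ^ p * v x ∂μ) ^ (1 / p) := by
  set U := ∫⁻ x in P, u x ∂μ
  set S := ∫⁻ x in P, v x ^ (1 - p') ∂μ
  set I := ∫⁻ x in P, f x ^ p * v x ∂μ
  have hp' := hpp.symm.pos
  have hA' : μ P ^ (-(1 - t)) * (U ^ (1 / q) * S ^ (1 / p')) ≤ A := by
    rw [ENNReal.rpow_mul_inv_mul_rpow hP0 hPt _ _ (by positivity), mul_right_comm,
      ENNReal.rpow_mul_inv_mul_rpow hP0 hPt _ _ (by positivity)] at hA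
    have := hpp.one_div_add_one_div
    rwa [show t + 1 / q - 1 / p - 1 / q - 1 / p' = -(1 - t) by rw [div_one] at this; linarith,
      mul_assoc, mul_comm (S ^ _)] at hA
  rcases eq_or_ne U 0 with hU | hU
  · rw [hU, ENNReal.zero_rpow_of_pos (by positivity), zero_mul]
    exact zero_le
  have hS : S ≠ ∞ := by
    intro hS
    rw [hS, ENNReal.top_rpow_of_pos (by positivity),
      ENNReal.mul_top (ENNReal.rpow_pos_of_nonneg (pos_iff_ne_zero.2 hU) (by positivity)).ne',
      ENNReal.mul_top (ENNReal.rpow_pos (pos_iff_ne_zero.2 hP0) hPt).ne'] at hA'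
    exact hAt (top_le_iff.1 hA')
  have hH : ∫⁻ x in P, f x ∂μ ≤ I ^ (1 / p) * S ^ (1 / p') :=
    lintegral_le_weighted_Lp_mul_Lq hpp hf.aemeasurable hv.aemeasurable hS hfv
  calc U ^ (1 / q) * ∫⁻ x in P, f x ∂μ ≤ U ^ (1 / q) * (I ^ (1 / p) * S ^ (1 / p')) := by
        gcongr
    _ = I ^ (1 / p) * (U ^ (1 / q) * S ^ (1 / p')) := by ring
    _ ≤ I ^ (1 / p) * (A * μ P ^ (1 - t)) :=
        mul_le_mul_of_nonneg_left (ENNReal.le_mul_rpow_of_rpow_neg_mul_le hP0 hPt hA') zero_le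
    _ = A * μ P ^ (1 - t) * I ^ (1 / p) := by ring

end Testing

section Summation

variable {X ι : Type*} [MeasurableSpace X] {μ : Measure X} {S : Set ι} {P : ι → Set X}
  {N : ℕ}

theorem tsum_setLIntegral_le_of_encard_le [Countable S] (hP : ∀ i, MeasurableSet (P i))
    {g : X → ℝ≥0∞} (hg : Measurable g) (hN : ∀ z, {i ∈ S | z ∈ P i}.encard ≤ N) :
    ∑' i : S, ∫⁻ x in P i, g x ∂μ ≤ N * ∫⁻ x, g x ∂μ := by
  simp_rw [← lintegral_indicator (hP _)]
  rw [← lintegral_tsum fun i : S => (hg.indicator (hP i)).aemeasurable, ← lintegral_const_mul _ hg]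
  refine lintegral_mono fun z => ?_
  calc ∑' i : S, (P i).indicator g z = ∑' _ : {i ∈ S | z ∈ P i}, g z := by
        rw [tsum_subtype S fun i => (P i).indicator g z,
          tsum_subtype {i ∈ S | z ∈ P i} fun _ => g z]
        congr 1
        ext i
        by_cases hi : i ∈ S <;> by_cases hz : z ∈ P i <;> simp [hi, hz]
    _ = {i ∈ S | z ∈ P i}.encard * g z := ENNReal.tsum_const _
    _ ≤ N * g z := by gcongr; exact_mod_cast hN z

theorem setLIntegral_le_of_cover (hS : S.Countable) (hP : ∀ i, MeasurableSet (P i))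
    {E : Set X} (hE : E ⊆ ⋃ i ∈ S, P i) (hN : ∀ z, {i ∈ S | z ∈ P i}.encard ≤ N)
    {u g : X → ℝ≥0∞} (hg : Measurable g) {K : ℝ≥0∞} {r : ℝ} (hr : 1 ≤ r)
    (hu : ∀ i ∈ S, ∫⁻ x in P i, u x ∂μ ≤ K * (∫⁻ x in P i, g x ∂μ) ^ r) :
    ∫⁻ x in E, u x ∂μ ≤ K * (N * ∫⁻ x, g x ∂μ) ^ r := by
  have := hS.to_subtype
  calc ∫⁻ x in E, u x ∂μ ≤ ∫⁻ x in ⋃ i : S, P i, u x ∂μ :=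
        lintegral_mono_set (by rwa [biUnion_eq_iUnion] at hE)
    _ ≤ ∑' i : S, ∫⁻ x in P i, u x ∂μ := lintegral_iUnion_le _ _
    _ ≤ ∑' i : S, K * (∫⁻ x in P i, g x ∂μ) ^ r := ENNReal.tsum_le_tsum fun i => hu i i.2
    _ = K * ∑' i : S, (∫⁻ x in P i, g x ∂μ) ^ r := ENNReal.tsum_mul_left
    _ ≤ K * (∑' i : S, ∫⁻ x in P i, g x ∂μ) ^ r := by
        gcongr; exact ENNReal.tsum_rpow_le_rpow_tsum _ hr
    _ ≤ K * (N * ∫⁻ x, g x ∂μ) ^ r := by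
        gcongr; exact tsum_setLIntegral_le_of_encard_le hP hg hN

end Summation

section WeakTypeOnCube

variable {X : Type*} [MeasurableSpace X] {μ : Measure X} {P Q : Set X} {u v f : X → ℝ≥0∞}
  {p q s : ℝ} {A D lam : ℝ≥0∞}

theorem setLIntegral_le_of_testing_of_doubling (hq : 0 < q) (hs : 0 ≤ s) (hQP : Q ⊆ P)
    (hQ0 : μ Q ≠ 0) (hQt : μ Q ≠ ∞) (hlam0 : lam ≠ 0) (hlamt : lam ≠ ∞)
    (htest : (∫⁻ x in P, u x ∂μ) ^ (1 / q) * ∫⁻ x in P, f x ∂μ ≤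
      A * μ P ^ s * (∫⁻ x in P, f x ^ p * v x ∂μ) ^ (1 / p))
    (hD : μ P ≤ D * μ Q) (hlam : lam * μ Q ^ s ≤ ∫⁻ x in Q, f x ∂μ) :
    ∫⁻ x in P, u x ∂μ ≤ (A * D ^ s) ^ q * lam ^ (-q) * (∫⁻ x in P, f x ^ p * v x ∂μ) ^ (q / p) := by
  set U := ∫⁻ x in P, u x ∂μ
  set I := ∫⁻ x in P, f x ^ p * v x ∂μ
  have hQs0 : μ Q ^ s ≠ 0 := (ENNReal.rpow_pos (pos_iff_ne_zero.2 hQ0) hQt).ne'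
  have hQst : μ Q ^ s ≠ ∞ := ENNReal.rpow_ne_top_of_nonneg hs hQt
  have hkey : lam * U ^ (1 / q) ≤ A * D ^ s * I ^ (1 / p) := by
    refine (ENNReal.mul_le_mul_iff_left hQs0 hQst).1 ?_
    calc lam * U ^ (1 / q) * μ Q ^ s = U ^ (1 / q) * (lam * μ Q ^ s) := by ring
      _ ≤ U ^ (1 / q) * ∫⁻ x in P, f x ∂μ := by gcongr; exact hlam.trans (lintegral_mono_set hQP)
      _ ≤ A * μ P ^ s * I ^ (1 / p) := htest
      _ ≤ A * (D * μ Q) ^ s * I ^ (1 / p) := by gcongr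
      _ = A * D ^ s * I ^ (1 / p) * μ Q ^ s := by
          rw [ENNReal.mul_rpow_of_nonneg _ _ hs]; ring
  rw [ENNReal.mul_le_iff_le_inv hlam0 hlamt] at hkey
  calc U = (U ^ q⁻¹) ^ q := (ENNReal.rpow_inv_rpow hq.ne' U).symm
    _ ≤ (lam⁻¹ * (A * D ^ s * I ^ (1 / p))) ^ q := by
        rw [← one_div]; exact ENNReal.rpow_le_rpow hkey hq.le
    _ = (A * D ^ s) ^ q * lam ^ (-q) * I ^ (q / p) := by
        rw [ENNReal.mul_rpow_of_nonneg _ _ hq.le, ENNReal.mul_rpow_of_nonneg _ _ hq.le,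
          ENNReal.inv_rpow, ← ENNReal.rpow_neg, ← ENNReal.rpow_mul, one_div_mul_eq_div]
        ring

end WeakTypeOnCube

section CubeGeometry

variable {d : ℕ}

theorem cube_mono (c : E d) {l l' : ℝ} (h : l ≤ l') : cube d c l ⊆ cube d c l' :=
  fun _ hx i => (hx i).trans (by linarith)

theorem mem_cube_of_forall_abs_sub_lt {θ s l : ℝ} {c x y : E d} (hx : x ∈ cube d c (θ * l))
    (hs : s ≤ (1 - θ) * l) (hxy : ∀ i, |x i - y i| < s / 2) : y ∈ cube d c l := by
  intro i
  linarith [abs_sub_le (y i) (x i) (c i), abs_sub_comm (x i) (y i), hxy i, hx i]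

theorem abs_sub_div_le_two_of_mem_cube {θ l ρ : ℝ} {c x z : E d} (hθ : θ < 1) (hl : 0 < l)
    (hρ : 0 < ρ) (hlρ : l ≤ 2 * ρ) (hx : x ∈ cube d c (θ * l)) (hz : z ∈ cube d c l)
    (i : Fin d) : |(x i - z i) / ρ| ≤ 2 := by
  rw [abs_div, abs_of_pos hρ, div_le_iff₀ hρ]
  have hθl : θ * l ≤ 1 * l := mul_le_mul_of_nonneg_right hθ.le hl.le
  linarith [abs_sub_le (x i) (c i) (z i), abs_sub_comm (c i) (z i), hx i, hz i]

theorem le_abs_div_sub_div_of_lt_abs {θ L L' c x y z : ℝ} (hL' : 0 < L') (hL : L' ≤ L)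
    (hx : |x - c| ≤ θ * L / 2) (hz : |z - c| ≤ L / 2) (hy : L / 2 < |y - c|) :
    (1 - θ) / 2 ≤ |(x - z) / L - (y - z) / L'| := by
  have key : ∀ x y z c : ℝ, |x - c| ≤ θ * L / 2 → |z - c| ≤ L / 2 → L / 2 < y - c →
      (1 - θ) / 2 ≤ (y - z) / L' - (x - z) / L := by
    intro x y z c hx hz hy
    have hyz : 0 ≤ y - z := by linarith [(abs_le.mp hz).2]
    have h1 : (y - z) / L ≤ (y - z) / L' := div_le_div_of_nonneg_left hyz hL' hL
    have h2 : (1 - θ) / 2 ≤ (y - z) / L - (x - z) / L := by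
      rw [← sub_div, le_div_iff₀ (hL'.trans_le hL)]
      linarith [(abs_le.mp hx).2]
    linarith
  rcases lt_abs.mp hy with hy | hy
  · exact (key x y z c hx hz hy).trans (by rw [abs_sub_comm]; exact le_abs_self _)
  · have := key (-x) (-y) (-z) (-c) (by rwa [neg_sub_neg, abs_sub_comm])
      (by rwa [neg_sub_neg, abs_sub_comm]) (by linarith)
    exact le_abs.mpr (.inl (this.trans_eq (by ring)))

theorem exists_le_abs_div_sub_div_of_notMem_cube {θ L L' : ℝ} {c x y z : E d} (hL' : 0 < L')
    (hL : L' ≤ L) (hx : x ∈ cube d c (θ * L)) (hz : z ∈ cube d c L) (hy : y ∉ cube d c L) :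
    ∃ i, (1 - θ) / 2 ≤ |(x i - z i) / L - (y i - z i) / L'| := by
  obtain ⟨i, hi⟩ : ∃ i, L / 2 < |y i - c i| := by simpa [cube] using hy
  exact ⟨i, le_abs_div_sub_div_of_lt_abs hL' hL (hx i) (hz i) hi⟩

theorem exists_lt_le_div_two_pow {B t : ℝ} (ht : 0 < t) (htB : t ≤ B) :
    ∃ n : ℕ, B / 2 ^ (n + 1) < t ∧ t ≤ B / 2 ^ n := by
  classical
  have hex : ∃ n : ℕ, B / 2 ^ (n + 1) < t := by
    obtain ⟨n, hn⟩ := pow_unbounded_of_one_lt (B / t) one_lt_two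
    refine ⟨n, (div_lt_iff₀ (by positivity)).2 ?_⟩
    rw [div_lt_iff₀ ht] at hn
    linarith [mul_le_mul_of_nonneg_right
      (pow_le_pow_right₀ (one_le_two : (1 : ℝ) ≤ 2) (by omega : n ≤ n + 1)) ht.le]
  refine ⟨Nat.find hex, Nat.find_spec hex, ?_⟩
  rcases h : Nat.find hex with _ | n
  · simpa using htB
  · exact le_of_not_gt (Nat.find_min hex (h ▸ n.lt_succ_self))

end CubeGeometry

section Covering

variable {d : ℕ} {B θ : ℝ} {c : E d → E d} {l : E d → ℝ}

theorem encard_le_of_greedy_selection (hB : 0 < B) (hθ : θ < 1) {S : ℕ → Set (E d)}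
    (hS : ∀ n, ∀ x ∈ S n,
      B / 2 ^ (n + 1) < l x ∧ l x ≤ B / 2 ^ n ∧ x ∈ cube d (c x) (θ * l x))
    (hsep : ∀ n, (S n).Pairwise fun x y => ∃ i, (1 - θ) * (B / 2 ^ (n + 1)) / 2 ≤ |x i - y i|)
    (hfar : ∀ m n, m < n → ∀ x ∈ S m, ∀ y ∈ S n, y ∉ cube d (c x) (l x)) (z : E d) :
    {x ∈ ⋃ n, S n | z ∈ cube d (c x) (l x)}.encard ≤
      (2 * ⌈2 / ((1 - θ) / 2)⌉₊ + 2) ^ (d + d) := by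
  set J := {x ∈ ⋃ n, S n | z ∈ cube d (c x) (l x)}
  choose! g hg using fun x (hx : x ∈ J) => mem_iUnion.1 hx.1
  have hr : ∀ n : ℕ, 0 < B / 2 ^ n := fun n => by positivity
  -- Points of different generations are told apart by their position relative to `z` in units
  -- of their own side length, points of the same generation by their position at the scale of
  -- that generation.
  let w : E d → Fin d ⊕ Fin d → ℝ := fun x => Sum.elim (fun i => (x i - z i) / l x)
    (fun i => (x i - z i) / (B / 2 ^ (g x + 1)))
  have hbound : ∀ x ∈ J, ∀ i, |w x i| ≤ 2 := by
    intro x hx i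
    obtain ⟨hlo, hhi, hxc⟩ := hS _ x (hg x hx)
    have hl0 : 0 < l x := (hr _).trans hlo
    have : B / 2 ^ g x = 2 * (B / 2 ^ (g x + 1)) := by rw [pow_succ]; field_simp
    rcases i with i | i
    · exact abs_sub_div_le_two_of_mem_cube hθ hl0 hl0 (by linarith) hxc hx.2 i
    · exact abs_sub_div_le_two_of_mem_cube hθ hl0 (hr _) (by linarith) hxc hx.2 i
  have hcross : ∀ x ∈ J, ∀ y ∈ J, g x < g y → ∃ i, (1 - θ) / 2 ≤ |w x i - w y i| := by
    intro x hx y hy hxy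
    obtain ⟨hxlo, -, hxc⟩ := hS _ x (hg x hx)
    obtain ⟨hylo, hyhi, -⟩ := hS _ y (hg y hy)
    have hyx : B / 2 ^ g y ≤ B / 2 ^ (g x + 1) :=
      div_le_div_of_nonneg_left hB.le (by positivity) (pow_le_pow_right₀ one_le_two hxy)
    obtain ⟨i, hi⟩ := exists_le_abs_div_sub_div_of_notMem_cube ((hr _).trans hylo)
      (by linarith) hxc hx.2 (hfar _ _ hxy x (hg x hx) y (hg y hy))
    exact ⟨.inl i, hi⟩
  refine (Set.Pairwise.encard_le_of_exists_le_abs_sub (s := (1 - θ) / 2) (by linarith) hbound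
    ?_).trans (by simp)
  intro x hx y hy hne
  rcases lt_trichotomy (g x) (g y) with h | h | h
  · exact hcross x hx y hy h
  · obtain ⟨i, hi⟩ := hsep (g y) (h ▸ hg x hx) (hg y hy) hne
    refine ⟨.inr i, ?_⟩
    simp only [w, Sum.elim_inr, h, ← sub_div, sub_sub_sub_cancel_right, abs_div,
      abs_of_pos (hr _)]
    rw [le_div_iff₀ (hr _)]
    linarith
  · obtain ⟨i, hi⟩ := hcross y hy x hx h
    exact ⟨i, by rwa [abs_sub_comm]⟩

theorem exists_countable_cover_by_cubes (hθ : θ < 1) :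
    ∃ N : ℕ, ∀ (B : ℝ) (A : Set (E d)) (c : E d → E d) (l : E d → ℝ), 0 < B →
      (∀ x ∈ A, 0 < l x ∧ l x ≤ B) → (∀ x ∈ A, x ∈ cube d (c x) (θ * l x)) →
      ∃ S ⊆ A, S.Countable ∧ A ⊆ ⋃ x ∈ S, cube d (c x) (l x) ∧
        ∀ z, {x ∈ S | z ∈ cube d (c x) (l x)}.encard ≤ N := by
  refine ⟨(2 * ⌈2 / ((1 - θ) / 2)⌉₊ + 2) ^ (d + d), fun B A c l hB hl hA => ?_⟩
  have h1θ : 0 < 1 - θ := by linarith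
  obtain ⟨S, hSG, hSsep, hSfar, hSall⟩ := exists_greedy_selection
    (fun n => {x ∈ A | B / 2 ^ (n + 1) < l x ∧ l x ≤ B / 2 ^ n})
    (fun x => cube d (c x) (l x))
    (fun n x y => ∃ i, (1 - θ) * (B / 2 ^ (n + 1)) / 2 ≤ |x i - y i|)
    (fun n x y ⟨i, hi⟩ => ⟨i, by rwa [abs_sub_comm]⟩)
  refine ⟨⋃ n, S n, iUnion_subset fun n x hx => (hSG n hx).1,
    countable_iUnion fun n => (hSsep n).countable_of_exists_le_abs_sub (w := fun x i => x i)
      (by positivity), ?_,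
    encard_le_of_greedy_selection hB hθ
      (fun n x hx => ⟨(hSG n hx).2.1, (hSG n hx).2.2, hA x (hSG n hx).1⟩)
      hSsep hSfar⟩
  intro y hy
  obtain ⟨n, hn⟩ := exists_lt_le_div_two_pow (hl y hy).1 (hl y hy).2
  simp only [mem_iUnion, exists_prop]
  rcases hSall n y ⟨hy, hn⟩ with ⟨m, -, x, hx, hyx⟩ | hyS | ⟨x, hx, -, hxy⟩
  · exact ⟨x, ⟨m, hx⟩, hyx⟩
  · exact ⟨y, ⟨n, hyS⟩, cube_mono _ (by nlinarith [(hl y hy).1]) (hA y hy)⟩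
  · push Not at hxy
    obtain ⟨-, hlo, -⟩ := hSG n hx
    exact ⟨x, ⟨n, hx⟩, mem_cube_of_forall_abs_sub_lt (hA x (hSG n hx).1)
      (mul_le_mul_of_nonneg_left hlo.le h1θ.le) hxy⟩

end Covering

section GaussianCubes

variable {d : ℕ}

theorem measurableSet_cube (c : E d) (l : ℝ) : MeasurableSet (cube d c l) := by
  simp only [cube, ofPred_forall]
  exact (isClosed_iInter fun i => isClosed_le (by fun_prop) continuous_const).measurableSet

theorem volume_cube (c : E d) (l : ℝ) :
    volume (cube d c l) = ENNReal.ofReal l ^ d := by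
  have : cube d c l = (MeasurableEquiv.toLp 2 (Fin d → ℝ)).symm ⁻¹'
      Icc (fun i => c i - l / 2) (fun i => c i + l / 2) := by
    ext x
    simp only [cube, mem_ofPred_eq, mem_preimage, MeasurableEquiv.coe_toLp_symm, mem_Icc,
      Pi.le_def, abs_le, ← forall_and]
    exact forall_congr' fun i => by constructor <;> intro h <;> constructor <;> linarith [h.1, h.2]
  rw [this, (EuclideanSpace.volume_preserving_symm_measurableEquiv_toLp (Fin d)).measure_preimage
    measurableSet_Icc.nullMeasurableSet, Real.volume_Icc_pi]
  simp

theorem gaussianM_cube_pos (c : E d) {l : ℝ} (hl : 0 < l) : 0 < gaussianM d (cube d c l) := by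
  rw [pos_iff_ne_zero, gaussianM, Ne, withDensity_apply_eq_zero' (by fun_prop)]
  have hρ : ∀ x : E d, 0 < Real.pi ^ (-(d : ℝ) / 2) * Real.exp (-‖x‖ ^ 2) :=
    fun x => by positivity
  simp only [ne_eq, ENNReal.ofReal_eq_zero, not_le, hρ, ofPred_true, univ_inter, volume_cube]
  exact pow_ne_zero _ (ENNReal.ofReal_pos.2 hl).ne'

theorem gaussianM_cube_ne_top (c : E d) (l : ℝ) :
    gaussianM d (cube d c l) ≠ ∞ := by
  refine ne_top_of_le_ne_top (b := ENNReal.ofReal (Real.pi ^ (-(d : ℝ) / 2)) * volume (cube d c l))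
    (mul_ne_top ofReal_ne_top (by rw [volume_cube c l]; exact pow_ne_top ofReal_ne_top)) ?_
  rw [gaussianM, withDensity_apply _ (measurableSet_cube c l), ← setLIntegral_const]
  refine lintegral_mono fun x => ENNReal.ofReal_le_ofReal ?_
  exact mul_le_of_le_one_right (by positivity) (Real.exp_le_one_iff.2 (by nlinarith))

theorem mfun_pos (c : E d) : 0 < mfun c := by
  unfold mfun
  split_ifs with h
  · exact one_pos
  · exact one_div_pos.2 (by linarith)

theorem mfun_le_one (c : E d) : mfun c ≤ 1 := by
  unfold mfun
  split_ifs with h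
  · exact le_rfl
  · exact (div_le_one (by linarith)).2 (by linarith)

theorem mfun_mul_norm_le_one (c : E d) : mfun c * ‖c‖ ≤ 1 := by
  unfold mfun
  split_ifs with h
  · simpa using h
  · rw [one_div, inv_mul_cancel₀ (by linarith)]

theorem dist_le_of_mem_cube {c x : E d} {l : ℝ} (hl : 0 ≤ l) (hx : x ∈ cube d c l) :
    dist x c ≤ √d * (l / 2) := by
  rw [EuclideanSpace.dist_eq]
  calc √(∑ i, dist (x i) (c i) ^ 2) ≤ √(∑ _i : Fin d, (l / 2) ^ 2) :=
        Real.sqrt_le_sqrt (Finset.sum_le_sum fun i _ =>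
          pow_le_pow_left₀ dist_nonneg (by simpa [Real.dist_eq] using hx i) 2)
    _ = √d * (l / 2) := by
        rw [Finset.sum_const, Finset.card_univ, Fintype.card_fin, nsmul_eq_mul,
          Real.sqrt_mul (Nat.cast_nonneg d), Real.sqrt_sq (by linarith)]

theorem abs_sq_norm_sub_sq_norm_le_of_mem_cube {β : ℝ} {c x : E d} {l : ℝ} (hl : 0 ≤ l)
    (hlc : l ≤ β * mfun c) (hx : x ∈ cube d c l) :
    |‖x‖ ^ 2 - ‖c‖ ^ 2| ≤ β * √d + d * β ^ 2 / 4 := by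
  have hm := mfun_pos c
  have hβ : 0 ≤ β := nonneg_of_mul_nonneg_left (hl.trans hlc) hm
  have hlβ : l ≤ β := hlc.trans (mul_le_of_le_one_right hβ (mfun_le_one c))
  have hlnorm : l * ‖c‖ ≤ β := by
    nlinarith [mfun_mul_norm_le_one c, norm_nonneg c,
      mul_le_mul_of_nonneg_right hlc (norm_nonneg c)]
  have hD := dist_le_of_mem_cube hl hx
  have htri : |‖x‖ - ‖c‖| ≤ dist x c := by
    rw [dist_eq_norm]; exact abs_norm_sub_norm_le x c
  calc |‖x‖ ^ 2 - ‖c‖ ^ 2| = |‖x‖ - ‖c‖| * (‖x‖ + ‖c‖) := by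
        rw [sq_sub_sq, abs_mul, abs_of_nonneg (by positivity : 0 ≤ ‖x‖ + ‖c‖), mul_comm]
    _ ≤ dist x c * (2 * ‖c‖ + dist x c) :=
        mul_le_mul htri (by linarith [(abs_le.1 htri).2]) (by positivity) dist_nonneg
    _ ≤ √d * (l / 2) * (2 * ‖c‖ + √d * (l / 2)) := by gcongr
    _ = √d * (l * ‖c‖) + √d ^ 2 * l ^ 2 / 4 := by ring
    _ ≤ √d * β + √d ^ 2 * β ^ 2 / 4 := by gcongr
    _ = β * √d + d * β ^ 2 / 4 := by rw [Real.sq_sqrt (Nat.cast_nonneg d)]; ring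

theorem exp_neg_sq_norm_le {x c : E d} {A : ℝ} (h : |‖x‖ ^ 2 - ‖c‖ ^ 2| ≤ A) :
    Real.exp (-‖x‖ ^ 2) ≤ Real.exp A * Real.exp (-‖c‖ ^ 2) := by
  rw [← Real.exp_add]
  exact Real.exp_le_exp.2 (by linarith [(abs_le.1 h).1])

theorem gaussianM_cube_mul_le {A k : ℝ} {c : E d} {l : ℝ} (hk : 1 ≤ k) (hl : 0 ≤ l)
    (hosc : ∀ x ∈ cube d c (k * l), |‖x‖ ^ 2 - ‖c‖ ^ 2| ≤ A) :
    gaussianM d (cube d c (k * l)) ≤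
      ENNReal.ofReal (Real.exp (2 * A) * k ^ d) * gaussianM d (cube d c l) := by
  set ρ : E d → ℝ := fun x => Real.pi ^ (-(d : ℝ) / 2) * Real.exp (-‖x‖ ^ 2)
  have hkl0 : 0 ≤ k * l := by nlinarith
  have hsub : cube d c l ⊆ cube d c (k * l) := cube_mono c (by nlinarith)
  have hπ : 0 ≤ Real.pi ^ (-(d : ℝ) / 2) := by positivity
  have hP : gaussianM d (cube d c (k * l)) ≤
      ENNReal.ofReal (Real.exp A * ρ c) * volume (cube d c (k * l)) := by
    rw [gaussianM, withDensity_apply _ (measurableSet_cube _ _), ← setLIntegral_const]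
    refine setLIntegral_mono measurable_const fun x hx => ENNReal.ofReal_le_ofReal ?_
    calc ρ x ≤ Real.pi ^ (-(d : ℝ) / 2) * (Real.exp A * Real.exp (-‖c‖ ^ 2)) :=
          mul_le_mul_of_nonneg_left (exp_neg_sq_norm_le (hosc x hx)) hπ
      _ = Real.exp A * ρ c := by ring
  have hQ : ENNReal.ofReal (Real.exp (-A) * ρ c) * volume (cube d c l) ≤
      gaussianM d (cube d c l) := by
    rw [gaussianM, withDensity_apply _ (measurableSet_cube _ _), ← setLIntegral_const]
    refine setLIntegral_mono (by fun_prop) fun x hx => ENNReal.ofReal_le_ofReal ?_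
    have := exp_neg_sq_norm_le (x := c) (c := x) (A := A)
      (by rw [abs_sub_comm]; exact hosc x (hsub hx))
    calc Real.exp (-A) * ρ c
        ≤ Real.exp (-A) * (Real.pi ^ (-(d : ℝ) / 2) * (Real.exp A * Real.exp (-‖x‖ ^ 2))) :=
          mul_le_mul_of_nonneg_left (mul_le_mul_of_nonneg_left this hπ) (Real.exp_pos _).le
      _ = ρ x := by simp only [ρ]; rw [Real.exp_neg]; field_simp
  calc gaussianM d (cube d c (k * l))
      ≤ ENNReal.ofReal (Real.exp A * ρ c) * volume (cube d c (k * l)) := hP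
    _ = ENNReal.ofReal (Real.exp (2 * A) * k ^ d) *
          (ENNReal.ofReal (Real.exp (-A) * ρ c) * volume (cube d c l)) := by
        rw [volume_cube c (k * l), volume_cube c l, ← ENNReal.ofReal_pow hkl0,
          ← ENNReal.ofReal_pow hl, ← ENNReal.ofReal_mul (by positivity),
          ← ENNReal.ofReal_mul (by positivity), ← ENNReal.ofReal_mul (by positivity)]
        congr 1
        rw [mul_pow, show 2 * A = A + A by ring, Real.exp_add, Real.exp_neg]
        field_simp
    _ ≤ _ := by gcongr

end GaussianCubes

theorem APair.exists_testing {d : ℕ} {b p q α : ℝ} {u v : E d → ℝ≥0∞} (hp : 1 ≤ p)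
    (hq : 0 < q) (hv : Measurable v) (hA : APair d b p q α u v) :
    ∃ A : ℝ≥0∞, A ≠ ∞ ∧ ∀ c l, adm d b c l → ∀ f, Measurable f →
      (∀ᵐ x ∂gaussianM d, f x ^ p * v x ≠ ∞) →
      (∫⁻ x in cube d c l, u x ∂gaussianM d) ^ (1 / q) * ∫⁻ x in cube d c l, f x ∂gaussianM d ≤
        A * gaussianM d (cube d c l) ^ (1 - α / d) *
          (∫⁻ x in cube d c l, f x ^ p * v x ∂gaussianM d) ^ (1 / p) := by
  have hP0 : ∀ c l, adm d b c l → gaussianM d (cube d c l) ≠ 0 :=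
    fun c l h => (gaussianM_cube_pos c h.1).ne'
  unfold APair at hA
  split_ifs at hA with hp1
  · subst hp1
    obtain ⟨C, hCt, hC⟩ := hA
    refine ⟨C, hCt, fun c l hcl f hf _ => ?_⟩
    simpa using rpow_setLIntegral_mul_setLIntegral_le_of_ae_le hq hv hf (hP0 c l hcl)
      (gaussianM_cube_ne_top c l) (hC c l hcl)
  · exact ⟨Aconst d b p q α u v, hA.ne, fun c l hcl f hf hfv =>
      rpow_setLIntegral_mul_setLIntegral_le_of_le
        (Real.HolderConjugate.conjExponent (lt_of_le_of_ne hp (Ne.symm hp1))) hq hv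
        hf (hP0 c l hcl) (gaussianM_cube_ne_top c l) hA.ne
        (le_iSup₂_of_le c l (le_iSup_of_le hcl le_rfl)) (ae_restrict_of_ae hfv)⟩

theorem adm_div_mul {d : ℕ} {a b : ℝ} {c : E d} {l : ℝ} (ha : 0 < a) (hb : 0 < b)
    (h : adm d a c l) : adm d b c (b / a * l) := by
  refine ⟨by have := h.1; positivity, ?_⟩
  calc b / a * l ≤ b / a * (a * mfun c) := by gcongr; exact h.2
    _ = b * mfun c := by field_simp

theorem exists_cube_of_lt_Mloc {d : ℕ} {a α : ℝ} {f : E d → ℝ≥0∞} {x : E d} {lam : ℝ≥0∞}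
    (h : lam < Mloc d a α f x) :
    ∃ c l, adm d a c l ∧ x ∈ cube d c l ∧
      lam * gaussianM d (cube d c l) ^ (1 - α / d) ≤ ∫⁻ y in cube d c l, f y ∂gaussianM d := by
  simp only [Mloc, lt_iSup_iff] at h
  obtain ⟨c, l, ⟨hcl, hx⟩, h⟩ := h
  refine ⟨c, l, hcl, hx, ENNReal.mul_rpow_le_of_le_rpow_neg_mul
    (gaussianM_cube_pos c hcl.1).ne' (gaussianM_cube_ne_top c l) ?_⟩
  rw [neg_sub]
  exact h.le

theorem APair.exists_local_weak_type {d : ℕ} {a b p q α : ℝ} {u v : E d → ℝ≥0∞} (ha : 0 < a)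
    (hab : a ≤ b) (hp : 1 ≤ p) (hq : 0 < q) (hαd : α < d) (hv : Measurable v)
    (hA : APair d b p q α u v) :
    ∃ C : ℝ≥0∞, C ≠ ∞ ∧ ∀ f, Measurable f → (∀ᵐ x ∂gaussianM d, f x ^ p * v x ≠ ∞) →
      ∀ lam : ℝ≥0∞, lam ≠ 0 → lam ≠ ∞ → ∀ c l, adm d a c l →
      lam * gaussianM d (cube d c l) ^ (1 - α / d) ≤ ∫⁻ x in cube d c l, f x ∂gaussianM d →
      ∫⁻ x in cube d c (b / a * l), u x ∂gaussianM d ≤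
        C * lam ^ (-q) * (∫⁻ x in cube d c (b / a * l), f x ^ p * v x ∂gaussianM d) ^ (q / p) := by
  have hs : 0 ≤ 1 - α / d := sub_nonneg.2 (div_le_one_of_le₀ hαd.le (Nat.cast_nonneg d))
  have hk : 1 ≤ b / a := (one_le_div ha).2 hab
  obtain ⟨A, hAt, htest⟩ := hA.exists_testing hp hq hv
  refine ⟨(A * ENNReal.ofReal (Real.exp (2 * (b * √d + d * b ^ 2 / 4)) * (b / a) ^ d) ^
    (1 - α / d)) ^ q, by finiteness, fun f hf hfv lam hlam0 hlamt c l hcl hlam => ?_⟩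
  have hcl' := adm_div_mul ha (ha.trans_le hab) hcl
  exact setLIntegral_le_of_testing_of_doubling hq hs
    (cube_mono c (le_mul_of_one_le_left hcl.1.le hk))
    (gaussianM_cube_pos c hcl.1).ne' (gaussianM_cube_ne_top c l) hlam0 hlamt
    (htest c _ hcl' f hf hfv)
    (gaussianM_cube_mul_le hk hcl.1.le fun y hy =>
      abs_sq_norm_sub_sq_norm_le_of_mem_cube hcl'.1.le hcl'.2 hy) hlam

theorem Mloc_weak_type_general (d : ℕ) (a b' p q α : ℝ) (ha : 0 < a) (hab : a < b')
    (hp : 1 ≤ p) (hpq : p ≤ q) (hαd : α < d)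
    (u v : E d → ℝ≥0∞) (hv : Measurable v)
    (hA : APair d b' p q α u v) :
    ∃ C : ℝ≥0∞, C ≠ ∞ ∧ ∀ (f : E d → ℝ≥0∞), Measurable f → ∀ lam : ℝ≥0∞, 0 < lam →
      ∫⁻ x in {x | lam < Mloc d a α f x}, u x ∂(gaussianM d) ≤
        C * lam ^ (-q) * (∫⁻ x, f x ^ p * v x ∂(gaussianM d)) ^ (q/p) := by
  have hq : 0 < q := by linarith
  have hb' : 0 < b' := ha.trans hab
  obtain ⟨C, hCt, hloc⟩ := hA.exists_local_weak_type ha hab.le hp hq hαd hv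
  obtain ⟨N, hcover⟩ := exists_countable_cover_by_cubes (d := d) ((div_lt_one hb').2 hab)
  -- The `+ 1` keeps the constant nonzero, as the case `∫ f ^ p * v = ∞` requires.
  refine ⟨C * N ^ (q / p) + 1, by finiteness, fun f hf lam hlam => ?_⟩
  rcases eq_or_ne lam ∞ with rfl | hlamt
  · simp
  set I := ∫⁻ x, f x ^ p * v x ∂gaussianM d
  rcases eq_or_ne I ∞ with hI | hI
  · rw [hI, ENNReal.top_rpow_of_pos (by positivity), ENNReal.mul_top (by simp [hlamt, hq.le])]
    exact le_top
  have hfv : ∀ᵐ x ∂gaussianM d, f x ^ p * v x ≠ ∞ :=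
    (ae_lt_top (by fun_prop) hI).mono fun _ h => h.ne
  choose! c l hadm hmem hlamQ using fun x (hx : lam < Mloc d a α f x) => exists_cube_of_lt_Mloc hx
  obtain ⟨S, hSE, hS, hcov, hN⟩ := hcover b' _ c (fun x => b' / a * l x) hb'
    (fun x hx => ⟨(adm_div_mul ha hb' (hadm x hx)).1, (adm_div_mul ha hb' (hadm x hx)).2.trans
      (mul_le_of_le_one_right hb'.le (mfun_le_one _))⟩)
    (fun x hx => by convert hmem x hx using 2; field_simp)
  calc ∫⁻ x in {x | lam < Mloc d a α f x}, u x ∂gaussianM d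
      ≤ C * lam ^ (-q) * (N * I) ^ (q / p) :=
        setLIntegral_le_of_cover hS (fun x => measurableSet_cube _ _) hcov hN (by fun_prop)
          ((one_le_div₀ (by linarith)).2 hpq) fun x hxS =>
            hloc f hf hfv lam hlam.ne' hlamt _ _ (hadm x (hSE hxS)) (hlamQ x (hSE hxS))
    _ = C * N ^ (q / p) * lam ^ (-q) * I ^ (q / p) := by
        rw [ENNReal.mul_rpow_of_nonneg (N : ℝ≥0∞) I (by positivity)]
        ring
    _ ≤ (C * N ^ (q / p) + 1) * lam ^ (-q) * I ^ (q / p) := by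
        gcongr
        exact le_self_add

/-- Two-weight weak-type bound for the local fractional maximal operator: if
`(u,v) ∈ A^{b'}_{p,q,α}` for some `b' > a`, then `M^a_α : L^p(v dγ) → L^{q,∞}(u dγ)`. -/
theorem Mloc_weak_type (d : ℕ) (a b' p q α : ℝ) (ha : 0 < a) (hab : a < b')
    (hp : 1 ≤ p) (hpq : p ≤ q) (hα : 0 ≤ α) (hαd : α < d)
    (u v : E d → ℝ≥0∞) (hu : Measurable u) (hv : Measurable v)
    (hA : APair d b' p q α u v) :
    ∃ C : ℝ≥0∞, C ≠ ∞ ∧ ∀ (f : E d → ℝ≥0∞), Measurable f → ∀ lam : ℝ≥0∞, 0 < lam →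
      ∫⁻ x in {x | lam < Mloc d a α f x}, u x ∂(gaussianM d) ≤
        C * lam ^ (-q) * (∫⁻ x, f x ^ p * v x ∂(gaussianM d)) ^ (q/p) :=
  Mloc_weak_type_general d a b' p q α ha hab hp hpq hαd u v hv hA

end
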